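/- Expectation identity: under the multi-layer hypothesis above, for any state preparation unitary P with P|0⟩ = Σ_{x∈X} √p_x |b(x)⟩ (Σ p_x = 1), and any observable of the form I_n ⊗ M with M Hermitian on the target, ⟨0⊗0| (P⊗I)† C† (I_n ⊗ M) C (P⊗I) |0⊗0⟩ = Σ_{x∈X} p_x ⟨0| U(x,θ)† M U(x,θ) |0⟩. -/
import Mathlib

open Matrix Complex
open scoped Kronecker

noncomputable section

def IsUnitary {N : Type*} [Fintype N] [DecidableEq N] (A : Matrix N N ℂ) : Prop :=
  A * Aᴴ = 1 ∧ Aᴴ * A = 1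

def vecKron {α β : Type*} (a : α → ℂ) (b : β → ℂ) : α × β → ℂ := fun p => a p.1 * b p.2

lemma kron_mulVec {I J K L : Type*} [Fintype J] [Fintype L]
    (A : Matrix I J ℂ) (B : Matrix K L ℂ) (a : J → ℂ) (b : L → ℂ) :
    (A ⊗ₖ B).mulVec (vecKron a b) = vecKron (A.mulVec a) (B.mulVec b) := by
  ext ⟨i, k⟩
  simp only [Matrix.mulVec, dotProduct, vecKron, Fintype.sum_prod_type,
    Matrix.kroneckerMap_apply]
  rw [Finset.sum_mul_sum]
  apply Finset.sum_congr rfl; intro j _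
  apply Finset.sum_congr rfl; intro l _
  ring

lemma star_vecKron {I K : Type*} (a : I → ℂ) (b : K → ℂ) :
    star (vecKron a b) = vecKron (star a) (star b) := by
  ext ⟨i, k⟩; simp [vecKron, mul_comm]

lemma dot_vecKron {I K : Type*} [Fintype I] [Fintype K] (a c : I → ℂ) (b d : K → ℂ) :
    vecKron a b ⬝ᵥ vecKron c d = (a ⬝ᵥ c) * (b ⬝ᵥ d) := by
  simp only [dotProduct, vecKron, Fintype.sum_prod_type]
  rw [Finset.sum_mul_sum]
  apply Finset.sum_congr rfl; intro j _
  apply Finset.sum_congr rfl; intro l _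
  ring


lemma sum_dot {I α : Type*} [Fintype I] [Fintype α] (f : α → I → ℂ) (v : I → ℂ) :
    (∑ a, f a) ⬝ᵥ v = ∑ a, f a ⬝ᵥ v := by
  simp only [dotProduct, Finset.sum_apply, Finset.sum_mul]
  rw [Finset.sum_comm]

lemma dot_sum {I α : Type*} [Fintype I] [Fintype α] (v : I → ℂ) (f : α → I → ℂ) :
    v ⬝ᵥ (∑ a, f a) = ∑ a, v ⬝ᵥ f a := by
  simp only [dotProduct, Finset.sum_apply, Finset.mul_sum]
  rw [Finset.sum_comm]

theorem cpqc_expectation_identity (n m : ℕ) (X : Type*) [Fintype X]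
    (bmap : X → Fin (2^n)) (hb : Function.Injective bmap)
    (U : X → Matrix (Fin (2^m)) (Fin (2^m)) ℂ) (hU : ∀ x, IsUnitary (U x))
    (C : Matrix (Fin (2^n) × Fin (2^m)) (Fin (2^n) × Fin (2^m)) ℂ) (hC : IsUnitary C)
    (hcpqc : ∀ x : X,
      C.mulVec (vecKron (Pi.single (bmap x) 1) (Pi.single 0 1))
        = vecKron (Pi.single (bmap x) 1) ((U x).mulVec (Pi.single 0 1)))
    (p : X → ℝ) (hp : ∀ x, 0 ≤ p x) (hpsum : ∑ x, p x = 1)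
    (P : Matrix (Fin (2^n)) (Fin (2^n)) ℂ) (hP : IsUnitary P)
    (hload : P.mulVec (Pi.single 0 1) =
      fun i => ∑ x, if i = bmap x then (Real.sqrt (p x) : ℂ) else 0)
    (M : Matrix (Fin (2^m)) (Fin (2^m)) ℂ) (hM : M.IsHermitian)
    (ψ : Fin (2^n) × Fin (2^m) → ℂ)
    (hψ : ψ = (P ⊗ₖ (1 : Matrix (Fin (2^m)) (Fin (2^m)) ℂ)).mulVec
      (vecKron (Pi.single 0 1) (Pi.single 0 1))) :
    star ψ ⬝ᵥ ((Cᴴ * ((1 : Matrix (Fin (2^n)) (Fin (2^n)) ℂ) ⊗ₖ M) * C).mulVec ψ)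
      = ∑ x, (p x : ℂ) *
        (star (Pi.single (0 : Fin (2^m)) (1 : ℂ)) ⬝ᵥ
          (((U x)ᴴ * M * U x).mulVec (Pi.single 0 1))) := by
  set e0n : Fin (2^n) → ℂ := Pi.single 0 1 with he0n
  set e0m : Fin (2^m) → ℂ := Pi.single 0 1 with he0m
  -- ψ as a sum
  have hvec : ψ = ∑ x, (Real.sqrt (p x) : ℂ) • vecKron (Pi.single (bmap x) 1) e0m := by
    rw [hψ, kron_mulVec]
    have h1 : (1 : Matrix (Fin (2^m)) (Fin (2^m)) ℂ).mulVec e0m = e0m := by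
      simp
    rw [h1, hload]
    ext ⟨i, k⟩
    simp only [vecKron, Finset.sum_apply, Pi.smul_apply, smul_eq_mul, Finset.sum_mul]
    apply Finset.sum_congr rfl; intro x _
    by_cases h : i = bmap x
    · simp [h, Pi.single_apply]
    · simp [h, Pi.single_apply, Ne.symm h]
  -- C applied to ψ
  have hCψ : C.mulVec ψ = ∑ x, (Real.sqrt (p x) : ℂ) •
      vecKron (Pi.single (bmap x) 1) ((U x).mulVec e0m) := by
    rw [hvec]
    rw [show ∀ v, C.mulVec v = C.mulVecLin v from fun _ => rfl]
    rw [map_sum]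
    apply Finset.sum_congr rfl; intro x _
    rw [_root_.map_smul]
    simp only [Matrix.mulVecLin_apply]
    rw [hcpqc x]
  -- reduce LHS to star (Cψ) ⬝ᵥ (1 ⊗ M) (Cψ)
  have lhs_eq : star ψ ⬝ᵥ ((Cᴴ * ((1 : Matrix (Fin (2^n)) (Fin (2^n)) ℂ) ⊗ₖ M) * C).mulVec ψ)
      = star (C.mulVec ψ) ⬝ᵥ
        (((1 : Matrix (Fin (2^n)) (Fin (2^n)) ℂ) ⊗ₖ M).mulVec (C.mulVec ψ)) := by
    rw [← Matrix.mulVec_mulVec, ← Matrix.mulVec_mulVec]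
    rw [Matrix.dotProduct_mulVec (star ψ), ← Matrix.star_mulVec]
  rw [lhs_eq, hCψ]
  -- push (1 ⊗ M) through the sum
  have hMsum : ((1 : Matrix (Fin (2^n)) (Fin (2^n)) ℂ) ⊗ₖ M).mulVec
      (∑ x, (Real.sqrt (p x) : ℂ) • vecKron (Pi.single (bmap x) 1) ((U x).mulVec e0m))
      = ∑ x, (Real.sqrt (p x) : ℂ) •
        vecKron (Pi.single (bmap x) 1) (M.mulVec ((U x).mulVec e0m)) := by
    rw [show ∀ v, ((1 : Matrix (Fin (2^n)) (Fin (2^n)) ℂ) ⊗ₖ M).mulVec v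
        = ((1 : Matrix (Fin (2^n)) (Fin (2^n)) ℂ) ⊗ₖ M).mulVecLin v from fun _ => rfl]
    rw [map_sum]
    apply Finset.sum_congr rfl; intro x _
    rw [_root_.map_smul, Matrix.mulVecLin_apply, kron_mulVec, Matrix.one_mulVec]
  rw [hMsum, star_sum, sum_dot]
  apply Finset.sum_congr rfl; intro x _
  rw [dot_sum]
  rw [Finset.sum_eq_single x]
  · rw [star_smul, smul_dotProduct, dotProduct_smul,
      star_vecKron, dot_vecKron]
    have hone : star (Pi.single (bmap x) (1:ℂ)) ⬝ᵥ Pi.single (bmap x) 1 = 1 := by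
      simp [dotProduct, Pi.single_apply, apply_ite]
    rw [hone, one_mul]
    have hsq : star ((Real.sqrt (p x) : ℂ)) • ((Real.sqrt (p x) : ℂ) •
        (star ((U x).mulVec e0m) ⬝ᵥ M.mulVec ((U x).mulVec e0m)))
        = (p x : ℂ) * (star ((U x).mulVec e0m) ⬝ᵥ M.mulVec ((U x).mulVec e0m)) := by
      rw [Complex.star_def, Complex.conj_ofReal, smul_eq_mul, smul_eq_mul, ← mul_assoc,
        ← Complex.ofReal_mul, Real.mul_self_sqrt (hp x)]
    rw [hsq]
    congr 1
    rw [← Matrix.mulVec_mulVec, ← Matrix.mulVec_mulVec,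
      Matrix.dotProduct_mulVec (star e0m), ← Matrix.star_mulVec,
      Matrix.dotProduct_mulVec (star ((U x).mulVec e0m)), ← Matrix.dotProduct_mulVec]
  · intro y _ hyx
    rw [star_smul, smul_dotProduct, dotProduct_smul,
      star_vecKron, dot_vecKron]
    have hzero : star (Pi.single (bmap x) (1:ℂ)) ⬝ᵥ Pi.single (bmap y) 1 = 0 := by
      have : bmap x ≠ bmap y := fun h => hyx (hb h).symm
      simp [dotProduct, Pi.single_apply, apply_ite, this, Ne.symm this]
    rw [hzero, zero_mul, smul_zero, smul_zero]
  · intro h; exact absurd (Finset.mem_univ x) h
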